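/- Let F be a figure with equilibrium function eq and let C be a strongly critical elementary cycle of G_F. Then for every tiling T of F, C is a cycle of G_T and C does not cut any tile of T, i.e., χ_T(a)=0 for every arc a of C. -/

import Mathlib

open Classical

noncomputable section

abbrev Vtx : Type := ℤ × ℤ
abbrev GArc : Type := Vtx × Vtx

/-- `a` is an arc of the grid graph `Λ⁺`: its endpoints differ by a unit vector. -/
def IsArc (a : GArc) : Prop :=
  (a.2.1 - a.1.1).natAbs + (a.2.2 - a.1.2).natAbs = 1

/-- reversal of an arc -/
def arev (a : GArc) : GArc := (a.2, a.1)

/-- `+1` if the cell with lower-left corner `c` is black, `-1` if it is white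
(checkerboard coloring). -/
def colorSign (c : Vtx) : ℤ := if (c.1 + c.2) % 2 = 0 then 1 else -1

/-- spin of an arc: `+1` if a traveler along the arc has a white cell on its left,
`-1` otherwise. -/
def sp (a : GArc) : ℤ :=
  colorSign a.1 * ((a.2.2 - a.1.2) ^ 2 - (a.2.1 - a.1.1) ^ 2)

/-- the arcs of a path/cycle given by its list of vertices -/
def arcsOf (C : List Vtx) : List GArc := C.zip C.tail

/-- sum of a function `g` on arcs over all the arcs of `C` (with multiplicity) -/
def sumOn (g : GArc → ℤ) (C : List Vtx) : ℤ := ((arcsOf C).map g).sum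

/-- a (closed) cycle of the grid -/
def IsCycle (C : List Vtx) : Prop :=
  2 ≤ C.length ∧ C.head? = C.getLast? ∧ ∀ a ∈ arcsOf C, IsArc a

/-- an elementary cycle: no repeated vertex except the endpoints -/
def IsElemCycle (C : List Vtx) : Prop := IsCycle C ∧ C.dropLast.Nodup

/-- contribution of an arc to the winding number of a cycle around the center of
cell `c` (crossings of the horizontal ray going East from the center of `c`). -/
def windTerm (c : Vtx) (a : GArc) : ℤ :=
  if a.1.1 = a.2.1 ∧ c.1 < a.1.1 ∧ min a.1.2 a.2.2 = c.2 then a.2.2 - a.1.2 else 0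

/-- winding number of the cycle `C` around the center of the cell `c` -/
def wind (C : List Vtx) (c : Vtx) : ℤ := sumOn (windTerm c) C

/-- a cycle is clockwise when its winding number around any cell is nonpositive
(`-1` on enclosed cells, `0` elsewhere) -/
def IsClockwise (C : List Vtx) : Prop := ∀ c : Vtx, wind C c ≤ 0

/-- a cell is enclosed by `C` when the winding number of `C` around it is nonzero -/
def Encloses (C : List Vtx) (c : Vtx) : Prop := wind C c ≠ 0

/-- number of black cells minus number of white cells enclosed by a clockwise cycle -/
def Dis (C : List Vtx) : ℤ := -∑ᶠ c : Vtx, wind C c * colorSign c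

/-- 4-adjacency of cells (shared edge) -/
def adj4 (c c' : Vtx) : Prop := (c'.1 - c.1).natAbs + (c'.2 - c.2).natAbs = 1

/-- 8-adjacency of cells (shared vertex at least) -/
def adj8 (c c' : Vtx) : Prop := c ≠ c' ∧ (c'.1 - c.1).natAbs ≤ 1 ∧ (c'.2 - c.2).natAbs ≤ 1

/-- a figure: a nonempty, finite, 4-connected set of cells such that no vertex has
all its incident edges on the boundary (no diagonal pinch, so no vertex
duplication is needed). -/
def IsFigure (F : Finset Vtx) : Prop :=
  F.Nonempty ∧
  (∀ c ∈ F, ∀ c' ∈ F, Relation.ReflTransGen (fun x y => x ∈ F ∧ y ∈ F ∧ adj4 x y) c c') ∧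
  (∀ x y : ℤ,
    ¬((x - 1, y - 1) ∈ F ∧ (x, y) ∈ F ∧ (x, y - 1) ∉ F ∧ (x - 1, y) ∉ F) ∧
    ¬((x, y - 1) ∈ F ∧ (x - 1, y) ∈ F ∧ (x - 1, y - 1) ∉ F ∧ (x, y) ∉ F))

/-- one of the two cells adjacent to the edge `[a]` -/
def cellA (a : GArc) : Vtx :=
  if a.1.2 = a.2.2 then (min a.1.1 a.2.1, a.1.2) else (a.1.1, min a.1.2 a.2.2)

/-- the other cell adjacent to the edge `[a]` -/
def cellB (a : GArc) : Vtx :=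
  if a.1.2 = a.2.2 then (min a.1.1 a.2.1, a.1.2 - 1) else (a.1.1 - 1, min a.1.2 a.2.2)

/-- arcs of the graph `G_F`: the edge `[a]` is a side of a cell of `F` -/
def ArcF (F : Finset Vtx) (a : GArc) : Prop := IsArc a ∧ (cellA a ∈ F ∨ cellB a ∈ F)

/-- boundary arcs of `F`: exactly one of the two adjacent cells is in `F` -/
def BoundaryArcF (F : Finset Vtx) (a : GArc) : Prop :=
  IsArc a ∧ ¬(cellA a ∈ F ↔ cellB a ∈ F)

/-- interior arcs of `F`: both adjacent cells are in `F` -/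
def InteriorArcF (F : Finset Vtx) (a : GArc) : Prop :=
  IsArc a ∧ cellA a ∈ F ∧ cellB a ∈ F

/-- `v` is a corner of the cell with lower-left corner `c` -/
def isCorner (v c : Vtx) : Prop :=
  (v.1 = c.1 ∨ v.1 = c.1 + 1) ∧ (v.2 = c.2 ∨ v.2 = c.2 + 1)

/-- vertices of `G_F`: the corners of the cells of `F` -/
def VF (F : Finset Vtx) : Set Vtx := {v | ∃ c ∈ F, isCorner v c}

/-- a cycle of the graph `G_F` -/
def IsCycleF (F : Finset Vtx) (C : List Vtx) : Prop :=
  2 ≤ C.length ∧ C.head? = C.getLast? ∧ ∀ a ∈ arcsOf C, ArcF F a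

/-- an elementary cycle of the graph `G_F` -/
def IsElemCycleF (F : Finset Vtx) (C : List Vtx) : Prop :=
  IsCycleF F C ∧ C.dropLast.Nodup

/-- number of black cells of `F` minus number of white cells of `F` enclosed by
the clockwise cycle `C` -/
def DisF (F : Finset Vtx) (C : List Vtx) : ℤ := -∑ c ∈ F, wind C c * colorSign c

/-- `ef` is skew-symmetric on the arcs of `G_F` -/
def IsSkewOnF (F : Finset Vtx) (ef : GArc → ℤ) : Prop :=
  ∀ a, ArcF F a → ef (arev a) = -ef a

/-- an equilibrium function of the figure `F` -/
def IsEquilibrium (F : Finset Vtx) (ef : GArc → ℤ) : Prop :=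
  IsSkewOnF F ef ∧
  ∀ C, IsElemCycleF F C → IsClockwise C → sumOn sp C + sumOn ef C = 4 * DisF F C

/-- the four sides of the cell `c`, as canonically oriented arcs -/
def sides (c : Vtx) : List GArc :=
  [((c.1, c.2), (c.1 + 1, c.2)), ((c.1, c.2 + 1), (c.1 + 1, c.2 + 1)),
   ((c.1, c.2), (c.1, c.2 + 1)), ((c.1 + 1, c.2), (c.1 + 1, c.2 + 1))]

/-- a domino tiling of `F`, encoded by the symmetric set `D` of the arcs whose
underlying edges are the central axes of its dominoes: every central axis has
both of its adjacent cells in `F` (dominoes are included in `F`), and every cell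
of `F` is covered by exactly one domino (exactly one of its sides is a central
axis): no overlap and no gap. -/
def IsTiling (F : Finset Vtx) (D : Set GArc) : Prop :=
  (∀ a ∈ D, arev a ∈ D) ∧
  (∀ a ∈ D, IsArc a ∧ cellA a ∈ F ∧ cellB a ∈ F) ∧
  (∀ c ∈ F, ∃! a, a ∈ sides c ∧ a ∈ D)

/-- characteristic function of a tiling: `1` on central axes, `0` elsewhere -/
def chi (D : Set GArc) (a : GArc) : ℤ := if a ∈ D then 1 else 0

/-- the height difference function of a tiling -/
def gT (ef : GArc → ℤ) (D : Set GArc) (a : GArc) : ℤ :=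
  ef a - sp a + 2 * sp a * (1 - 2 * chi D a)

/-- the function `t`: `eq(a)-sp(a)+2` on interior arcs, `eq(a)+sp(a)` on boundary arcs -/
def tArc (F : Finset Vtx) (ef : GArc → ℤ) (a : GArc) : ℤ :=
  if cellA a ∈ F ∧ cellB a ∈ F then ef a - sp a + 2 else ef a + sp a

/-- the function `b`: `eq(a)-sp(a)-2` on interior arcs, `eq(a)+sp(a)` on boundary arcs -/
def bArc (F : Finset Vtx) (ef : GArc → ℤ) (a : GArc) : ℤ :=
  if cellA a ∈ F ∧ cellB a ∈ F then ef a - sp a - 2 else ef a + sp a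

/-- the 8-connected component of the cell `c` in the complement of `F` -/
def comp8 (F : Finset Vtx) (c : Vtx) : Set Vtx :=
  {c' | Relation.ReflTransGen (fun x y => x ∉ F ∧ y ∉ F ∧ adj8 x y) c c'}

/-- `c` belongs to a hole of `F` (a finite 8-connected component of the complement) -/
def IsHoleCell (F : Finset Vtx) (c : Vtx) : Prop := c ∉ F ∧ (comp8 F c).Finite

/-- `c` belongs to `H_∞`, the infinite 8-connected component of the complement -/
def IsHinfCell (F : Finset Vtx) (c : Vtx) : Prop := c ∉ F ∧ ¬(comp8 F c).Finite

/-- `w` is a vertex of `V_F` on the boundary of `H_∞` -/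
def OnOuterBoundary (F : Finset Vtx) (w : Vtx) : Prop :=
  w ∈ VF F ∧ ∃ c, IsHinfCell F c ∧ isCorner w c

/-- vertices on the boundary of `F` -/
def Vb (F : Finset Vtx) : Set Vtx :=
  {v | (∃ c ∈ F, isCorner v c) ∧ ∃ c, c ∉ F ∧ isCorner v c}

/-- `h` belongs to the class `H_F` of height functions -/
def InHF (F : Finset Vtx) (ef : GArc → ℤ) (w0 : Vtx) (h : Vtx → ℤ) : Prop :=
  h w0 = 0 ∧ ∀ a, ArcF F a →
    (h a.2 - h a.1 = bArc F ef a ∨ h a.2 - h a.1 = tArc F ef a)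

/-- `h` is the height function induced by the tiling `D` (based at `w0`) -/
def IsHeightOf (F : Finset Vtx) (ef : GArc → ℤ) (D : Set GArc) (w0 : Vtx)
    (h : Vtx → ℤ) : Prop :=
  h w0 = 0 ∧ ∀ a, ArcF F a → h a.2 - h a.1 = gT ef D a

/-- a critical cycle: an elementary cycle of `G_F` with `t(C) = 0` -/
def CriticalCycle (F : Finset Vtx) (ef : GArc → ℤ) (C : List Vtx) : Prop :=
  IsElemCycleF F C ∧ sumOn (tArc F ef) C = 0

/-- a strongly critical cycle: critical, and `sp(a) = 1` on all its interior arcs -/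
def StronglyCriticalCycle (F : Finset Vtx) (ef : GArc → ℤ) (C : List Vtx) : Prop :=
  CriticalCycle F ef C ∧ ∀ a ∈ arcsOf C, InteriorArcF F a → sp a = 1

/-- two vertices are critically equivalent when some critical cycle passes
through both -/
def critRel (F : Finset Vtx) (ef : GArc → ℤ) (v v' : Vtx) : Prop :=
  ∃ C, CriticalCycle F ef C ∧ v ∈ C ∧ v' ∈ C

/-- the forced component of the vertex `v` (class of the equivalence relation
generated by critical equivalence) -/
def fcomp (F : Finset Vtx) (ef : GArc → ℤ) (v : Vtx) : Set Vtx :=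
  {v' | v' ∈ VF F ∧ Relation.EqvGen (critRel F ef) v v'}

/-- `S` is a forced component of `F` -/
def IsForcedComponent (F : Finset Vtx) (ef : GArc → ℤ) (S : Set Vtx) : Prop :=
  ∃ v ∈ VF F, S = fcomp F ef v

/-- `a` is an arc of the graph `G_T` of the tiling `D` -/
def GTArc (F : Finset Vtx) (ef : GArc → ℤ) (D : Set GArc) (a : GArc) : Prop :=
  ArcF F a ∧ gT ef D a = tArc F ef a

/-- there is a directed path in `G_T` from `u` to `v` -/
def GTReach (F : Finset Vtx) (ef : GArc → ℤ) (D : Set GArc) (u v : Vtx) : Prop :=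
  Relation.ReflTransGen (fun x y => GTArc F ef D (x, y)) u v

/-- the result of an upward flip on the component `S`: add `4` on `S` -/
def flipUpAt (S : Set Vtx) (h : Vtx → ℤ) : Vtx → ℤ :=
  fun v => h v + S.indicator (fun _ => (4 : ℤ)) v

/-- the result of a downward flip on the component `S`: subtract `4` on `S` -/
def flipDownAt (S : Set Vtx) (h : Vtx → ℤ) : Vtx → ℤ :=
  fun v => h v - S.indicator (fun _ => (4 : ℤ)) v

/-- `|h(v_S) - h'(v_S)|` for a representative `v_S` of `S` -/
def compDiff (h h' : Vtx → ℤ) (S : Set Vtx) : ℤ :=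
  if hS : S.Nonempty then |h hS.some - h' hS.some| else 0

/-- the distance `Δ(h,h') = Σ_U |h(v_U) - h'(v_U)|` over forced components `U` -/
def Delta (F : Finset Vtx) (ef : GArc → ℤ) (h h' : Vtx → ℤ) : ℤ :=
  ∑ᶠ S ∈ {S : Set Vtx | IsForcedComponent F ef S}, compDiff h h' S

/-- a sequence of `n` allowed upward flips at forced components distinct from `U_∞` -/
def UpFlipSeq (F : Finset Vtx) (ef : GArc → ℤ) (w0 : Vtx) (f : ℕ → Vtx → ℤ)
    (n : ℕ) : Prop :=
  ∀ i < n, ∃ S, IsForcedComponent F ef S ∧ S ≠ fcomp F ef w0 ∧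
    InHF F ef w0 (f i) ∧ InHF F ef w0 (f (i + 1)) ∧ f (i + 1) = flipUpAt S (f i)

/-- a sequence of `n` allowed (upward or downward) flips, flipping at step `i`
the forced component `s i` (distinct from `U_∞`) -/
def FlipSeq (F : Finset Vtx) (ef : GArc → ℤ) (w0 : Vtx) (f : ℕ → Vtx → ℤ)
    (s : ℕ → Set Vtx) (n : ℕ) : Prop :=
  ∀ i < n, IsForcedComponent F ef (s i) ∧ s i ≠ fcomp F ef w0 ∧
    InHF F ef w0 (f i) ∧ InHF F ef w0 (f (i + 1)) ∧
    (f (i + 1) = flipUpAt (s i) (f i) ∨ f (i + 1) = flipDownAt (s i) (f i))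

/-- the four arcs of the two horizontal edges through `v` (central axes of the
pair of vertical dominoes covering the 2×2 square centered at `v`) -/
def hPairAxes (v : Vtx) : Set GArc :=
  {((v.1 - 1, v.2), v), (v, (v.1 - 1, v.2)), (v, (v.1 + 1, v.2)), ((v.1 + 1, v.2), v)}

/-- the four arcs of the two vertical edges through `v` (central axes of the
pair of horizontal dominoes covering the 2×2 square centered at `v`) -/
def vPairAxes (v : Vtx) : Set GArc :=
  {((v.1, v.2 - 1), v), (v, (v.1, v.2 - 1)), (v, (v.1, v.2 + 1)), ((v.1, v.2 + 1), v)}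

/-- a local flip: replace the pair of dominoes covering a 2×2 square by the
other pair covering the same square -/
def LocalFlip (D D' : Set GArc) : Prop :=
  ∃ v : Vtx, (hPairAxes v ⊆ D ∧ D' = (D \ hPairAxes v) ∪ vPairAxes v) ∨
             (vPairAxes v ⊆ D ∧ D' = (D \ vPairAxes v) ∪ hPairAxes v)

/-- a sequence of `n` local flips between tilings of `F` -/
def LocalFlipSeq (F : Finset Vtx) (g : ℕ → Set GArc) (n : ℕ) : Prop :=
  ∀ i < n, IsTiling F (g i) ∧ IsTiling F (g (i + 1)) ∧ LocalFlip (g i) (g (i + 1))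

/-- `h` is a maximal element of `(H_F, ≤)` -/
def MaximalInHF (F : Finset Vtx) (ef : GArc → ℤ) (w0 : Vtx) (h : Vtx → ℤ) : Prop :=
  InHF F ef w0 h ∧ ∀ h', InHF F ef w0 h' →
    (∀ v ∈ VF F, h v ≤ h' v) → ∀ v ∈ VF F, h' v = h v

/-- `h` is a minimal element of `(H_F, ≤)` -/
def MinimalInHF (F : Finset Vtx) (ef : GArc → ℤ) (w0 : Vtx) (h : Vtx → ℤ) : Prop :=
  InHF F ef w0 h ∧ ∀ h', InHF F ef w0 h' →
    (∀ v ∈ VF F, h' v ≤ h v) → ∀ v ∈ VF F, h' v = h v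

/-- an elementary cycle of `G_F` enclosing a single cell of `F` -/
def AroundSingleCell (F : Finset Vtx) (C : List Vtx) : Prop :=
  IsElemCycleF F C ∧ ∃ c ∈ F, ∀ c' : Vtx, wind C c' ≠ 0 ↔ c' = c

/-- a cycle of `G_F` following clockwise the boundary of a hole of `F`: it
winds `-1` around each cell of the hole and `0` around every other cell -/
def IsClockwiseHoleContour (F : Finset Vtx) (C : List Vtx) : Prop :=
  IsElemCycleF F C ∧ ∃ c₀, IsHoleCell F c₀ ∧
    (∀ c ∈ comp8 F c₀, wind C c = -1) ∧ (∀ c ∉ comp8 F c₀, wind C c = 0)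

end

/-!
On a strongly critical cycle `C` we have `t = eq + sp`, so criticality says `sp(C) + eq(C) = 0`,
and the equilibrium condition (for `C` or its reverse) turns this into `Dis_F(C) = 0`.
Discrete Stokes applied to `sp · χ_T`, whose circulation around each cell of `F` is minus its
colour (exactly one side of each cell is a central axis), gives `∑_C sp · χ_T = Dis_F(C) = 0`.
Central axes are interior arcs, on which `sp = 1` along `C`, so `C` crosses no axis, and then
`g_T = eq + sp = t` on `C`.

That `C` or its reverse is clockwise is a discrete Jordan argument: across each edge of an
elementary cycle the windings of the two adjacent cells differ by `1`, and their sum `S` is the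
same for all edges of `C`, because at each vertex the two edges not used by `C` are not crossed.
Walking east from any cell, the winding is constant until an edge of `C` is met and vanishes far
away, so every winding is `0` or `(S ± 1) / 2`: all windings have the sign of `S`.
-/

lemma isArc_iff {u v : Vtx} :
    IsArc (u, v) ↔
      v = (u.1 + 1, u.2) ∨ v = (u.1 - 1, u.2) ∨ v = (u.1, u.2 + 1) ∨ v = (u.1, u.2 - 1) := by
  obtain ⟨x, y⟩ := u
  obtain ⟨x', y'⟩ := v
  simp only [IsArc, Prod.mk.injEq]
  omega

@[simp]
lemma arev_arev (a : GArc) : arev (arev a) = a := rfl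

lemma arev_eq_iff {a b : GArc} : arev a = b ↔ a = arev b :=
  ⟨fun h => h ▸ (arev_arev a).symm, fun h => h ▸ arev_arev b⟩

lemma IsArc.arev {a : GArc} (h : IsArc a) : IsArc (arev a) := by
  simp only [IsArc, _root_.arev] at *
  omega

lemma sp_arev {a : GArc} (h : IsArc a) : sp (arev a) = -sp a := by
  obtain ⟨⟨x, y⟩, v⟩ := a
  rcases isArc_iff.1 h with rfl | rfl | rfl | rfl <;>
    simp only [sp, arev, colorSign] <;> split_ifs <;> ring_nf <;> omega

lemma cellA_arev {a : GArc} (h : IsArc a) : cellA (arev a) = cellA a := by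
  obtain ⟨⟨x, y⟩, v⟩ := a
  rcases isArc_iff.1 h with rfl | rfl | rfl | rfl <;> simp [cellA, arev, eq_sub_iff_add_eq]

lemma cellB_arev {a : GArc} (h : IsArc a) : cellB (arev a) = cellB a := by
  obtain ⟨⟨x, y⟩, v⟩ := a
  rcases isArc_iff.1 h with rfl | rfl | rfl | rfl <;> simp [cellB, arev, eq_sub_iff_add_eq]

lemma windTerm_arev (c : Vtx) (a : GArc) : windTerm c (arev a) = -windTerm c a := by
  simp only [windTerm, arev, min_comm a.2.2]
  split_ifs <;> omega

lemma sumOn_congr {f g : GArc → ℤ} {C : List Vtx} (h : ∀ a ∈ arcsOf C, f a = g a) :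
    sumOn f C = sumOn g C := by
  rw [sumOn, sumOn, List.map_congr_left h]

lemma sumOn_add (f g : GArc → ℤ) (C : List Vtx) :
    sumOn (fun a => f a + g a) C = sumOn f C + sumOn g C :=
  List.sum_map_add

lemma sumOn_neg (f : GArc → ℤ) (C : List Vtx) : sumOn (fun a => -f a) C = -sumOn f C := by
  rw [sumOn, sumOn, List.sum_neg, List.map_map]
  rfl

lemma sumOn_sub (f g : GArc → ℤ) (C : List Vtx) :
    sumOn (fun a => f a - g a) C = sumOn f C - sumOn g C := by
  simp only [sub_eq_add_neg, sumOn_add, sumOn_neg]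

lemma sumOn_finset_sum {ι : Type*} (s : Finset ι) (g : ι → GArc → ℤ) (C : List Vtx) :
    sumOn (fun a => ∑ i ∈ s, g i a) C = ∑ i ∈ s, sumOn (g i) C := by
  simp only [sumOn]
  induction arcsOf C with
  | nil => simp
  | cons a l ih => simp [ih, Finset.sum_add_distrib]

lemma arcsOf_eq_zip_dropLast (C : List Vtx) : arcsOf C = C.dropLast.zip C.tail := by
  induction C with
  | nil => rfl
  | cons v l ih =>
    rcases l with _ | ⟨w, l⟩
    · rfl
    · simp only [arcsOf, List.tail_cons, List.zip_cons_cons] at ih ⊢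
      rw [ih, List.dropLast_cons_of_ne_nil (List.cons_ne_nil w l), List.zip_cons_cons]

lemma map_fst_arcsOf (C : List Vtx) : (arcsOf C).map Prod.fst = C.dropLast := by
  rw [arcsOf_eq_zip_dropLast, List.map_fst_zip (by simp)]

lemma map_snd_arcsOf (C : List Vtx) : (arcsOf C).map Prod.snd = C.tail :=
  List.map_snd_zip (by simp)

lemma tail_perm_dropLast {C : List Vtx} (hcl : C.head? = C.getLast?) : C.tail.Perm C.dropLast := by
  rcases C with _ | ⟨v, l⟩
  · rfl
  rcases eq_or_ne l [] with rfl | hl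
  · rfl
  have hlast : l.getLast hl = v := by
    simpa [List.getLast?_cons, List.getLast?_eq_some_getLast hl] using hcl.symm
  rw [List.tail_cons, List.dropLast_cons_of_ne_nil hl]
  nth_rw 1 [← List.dropLast_append_getLast hl]
  rw [hlast]
  exact List.perm_append_singleton v _

lemma sumOn_sub_eq_zero {C : List Vtx} (hcl : C.head? = C.getLast?) (H : Vtx → ℤ) :
    sumOn (fun a => H a.2 - H a.1) C = 0 := by
  rw [sumOn_sub]
  change ((arcsOf C).map (H ∘ Prod.snd)).sum - ((arcsOf C).map (H ∘ Prod.fst)).sum = 0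
  rw [← List.map_map, map_snd_arcsOf, ← List.map_map, map_fst_arcsOf,
    ((tail_perm_dropLast hcl).map H).sum_eq, sub_self]

lemma arcsOf_reverse (C : List Vtx) : arcsOf C.reverse = ((arcsOf C).map arev).reverse := by
  rw [arcsOf_eq_zip_dropLast, arcsOf_eq_zip_dropLast, List.dropLast_reverse, List.tail_reverse,
    List.zip_eq_zipWith, ← List.reverse_zipWith (by simp), ← List.zip_eq_zipWith,
    ← List.zip_swap]
  rfl

lemma mem_arcsOf_reverse {a : GArc} {C : List Vtx} :
    a ∈ arcsOf C.reverse ↔ arev a ∈ arcsOf C := by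
  rw [arcsOf_reverse, List.mem_reverse, List.mem_map]
  exact ⟨fun ⟨b, hb, hba⟩ => hba ▸ hb, fun h => ⟨arev a, h, rfl⟩⟩

lemma sumOn_reverse {f : GArc → ℤ} {C : List Vtx} (hf : ∀ a ∈ arcsOf C, f (arev a) = -f a) :
    sumOn f C.reverse = -sumOn f C := by
  rw [← sumOn_neg, sumOn, sumOn, arcsOf_reverse, List.map_reverse, List.sum_reverse, List.map_map,
    List.map_congr_left (f := f ∘ arev) (g := fun a => -f a) hf]

lemma wind_reverse (C : List Vtx) (c : Vtx) : wind C.reverse c = -wind C c :=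
  sumOn_reverse fun a _ => windTerm_arev c a

lemma DisF_reverse (F : Finset Vtx) (C : List Vtx) : DisF F C.reverse = -DisF F C := by
  simp only [DisF, wind_reverse, neg_mul, Finset.sum_neg_distrib, neg_neg]

lemma IsElemCycleF.reverse {F : Finset Vtx} {C : List Vtx} (hC : IsElemCycleF F C) :
    IsElemCycleF F C.reverse := by
  obtain ⟨⟨hlen, hcl, harc⟩, hnd⟩ := hC
  refine ⟨⟨by simpa using hlen, by simpa using hcl.symm, fun a ha => ?_⟩, ?_⟩
  · obtain ⟨hA, hAB⟩ := harc _ (mem_arcsOf_reverse.1 ha)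
    have h : IsArc a := hA.arev
    exact ⟨h, by rwa [cellA_arev h, cellB_arev h] at hAB⟩
  · rw [List.dropLast_reverse, List.nodup_reverse]
    exact (tail_perm_dropLast hcl).nodup_iff.2 hnd

def curl (f : GArc → ℤ) (c : Vtx) : ℤ :=
  f ((c.1, c.2), (c.1 + 1, c.2)) + f ((c.1 + 1, c.2), (c.1 + 1, c.2 + 1))
    - f ((c.1, c.2 + 1), (c.1 + 1, c.2 + 1)) - f ((c.1, c.2), (c.1, c.2 + 1))

noncomputable def prefixSum (g : ℤ → ℤ) (y : ℤ) : ℤ :=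
  ∑ i ∈ Finset.Ico 0 y, g i - ∑ i ∈ Finset.Ico y 0, g i

lemma prefixSum_zero (g : ℤ → ℤ) : prefixSum g 0 = 0 := by
  simp [prefixSum]

lemma prefixSum_add_one (g : ℤ → ℤ) (y : ℤ) :
    prefixSum g (y + 1) = prefixSum g y + g y := by
  rcases le_or_gt 0 y with hy | hy
  · rw [prefixSum, prefixSum, ← Finset.insert_Ico_right_eq_Ico_add_one hy,
      Finset.sum_insert (by simp), Finset.Ico_eq_empty_of_le (by omega : (0 : ℤ) ≤ y + 1),
      Finset.Ico_eq_empty_of_le hy]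
    ring
  · rw [prefixSum, prefixSum, ← Finset.insert_Ico_add_one_left_eq_Ico hy,
      Finset.sum_insert (by simp), Finset.Ico_eq_empty_of_le (by omega : y + 1 ≤ 0),
      Finset.Ico_eq_empty_of_le hy.le]
    ring

noncomputable def potential (f : GArc → ℤ) (v : Vtx) : ℤ :=
  prefixSum (fun x => f ((x, 0), (x + 1, 0))) v.1 +
    prefixSum (fun y => f ((v.1, y), (v.1, y + 1))) v.2

section Potential

variable {f : GArc → ℤ}

lemma potential_up (f : GArc → ℤ) (x y : ℤ) :
    potential f (x, y + 1) - potential f (x, y) = f ((x, y), (x, y + 1)) := by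
  simp only [potential, prefixSum_add_one]
  ring

lemma potential_right (hf : ∀ c, curl f c = 0) (x y : ℤ) :
    potential f (x + 1, y) - potential f (x, y) = f ((x, y), (x + 1, y)) := by
  induction y using Int.induction_on with
  | zero =>
    simp only [potential, prefixSum_add_one, prefixSum_zero]
    ring
  | succ y ih =>
    have := hf (x, y)
    simp only [curl] at this
    linarith [potential_up f x y, potential_up f (x + 1) y]
  | pred y ih =>
    have := hf (x, -y - 1)
    simp only [curl, sub_add_cancel] at this
    have h₁ := potential_up f x (-y - 1)
    have h₂ := potential_up f (x + 1) (-y - 1)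
    simp only [sub_add_cancel] at h₁ h₂
    linarith

lemma eq_potential_sub (hf : ∀ c, curl f c = 0) (hskew : ∀ a, IsArc a → f (arev a) = -f a)
    {a : GArc} (ha : IsArc a) : f a = potential f a.2 - potential f a.1 := by
  obtain ⟨⟨x, y⟩, v⟩ := a
  rcases isArc_iff.1 ha with rfl | rfl | rfl | rfl
  · exact (potential_right hf x y).symm
  · have h := hskew ((x - 1, y), (x, y)) (by simp [IsArc])
    have := potential_right hf (x - 1) y
    simp only [arev, sub_add_cancel] at h this ⊢
    linarith
  · exact (potential_up f x y).symm
  · have h := hskew ((x, y - 1), (x, y)) (by simp [IsArc])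
    have := potential_up f x (y - 1)
    simp only [arev, sub_add_cancel] at h this ⊢
    linarith

lemma sumOn_eq_zero_of_curl_eq_zero (hf : ∀ c, curl f c = 0)
    (hskew : ∀ a, IsArc a → f (arev a) = -f a) {C : List Vtx} (hcl : C.head? = C.getLast?)
    (hC : ∀ a ∈ arcsOf C, IsArc a) : sumOn f C = 0 := by
  rw [sumOn_congr fun a ha => eq_potential_sub hf hskew (hC a ha)]
  exact sumOn_sub_eq_zero hcl _

end Potential

lemma curl_windTerm (c c' : Vtx) : curl (windTerm c) c' = if c' = c then 1 else 0 := by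
  obtain ⟨x, y⟩ := c
  obtain ⟨p, q⟩ := c'
  simp only [curl, windTerm, Prod.ext_iff, min_def, true_and]
  split_ifs <;> omega

/-- Discrete Stokes formula: subtracting from `f` the winding terms weighted by its curl leaves a
curl-free function, which is a gradient and so sums to zero along closed paths. -/
theorem sumOn_eq_sum_wind_mul_curl {f : GArc → ℤ} {F : Finset Vtx}
    (hskew : ∀ a, IsArc a → f (arev a) = -f a) (hF : ∀ c ∉ F, curl f c = 0)
    {C : List Vtx} (hcl : C.head? = C.getLast?) (hC : ∀ a ∈ arcsOf C, IsArc a) :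
    sumOn f C = ∑ c ∈ F, wind C c * curl f c := by
  have h := sumOn_eq_zero_of_curl_eq_zero (f := fun a => f a - ∑ c ∈ F, curl f c * windTerm c a)
    (fun c' => ?_) (fun a ha => ?_) hcl hC
  · rw [sumOn_sub, sumOn_finset_sum] at h
    simp only [wind, sumOn, List.sum_map_mul_left, mul_comm _ (curl f _)] at h ⊢
    linarith
  · have : curl (fun a => f a - ∑ c ∈ F, curl f c * windTerm c a) c'
        = curl f c' - ∑ c ∈ F, curl f c * curl (windTerm c) c' := by
      simp only [curl, mul_add, mul_sub, Finset.sum_add_distrib, Finset.sum_sub_distrib]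
      ring
    rw [this]
    simp only [curl_windTerm, mul_ite, mul_one, mul_zero, Finset.sum_ite_eq]
    split_ifs with hc'
    · ring
    · simp [hF c' hc']
  · simp only [hskew a ha, windTerm_arev, mul_neg, Finset.sum_neg_distrib]
    ring

def edgeIndicator (e a : GArc) : ℤ := if a = e then 1 else if a = arev e then -1 else 0

lemma edgeIndicator_arev {e : GArc} (he : IsArc e) (a : GArc) :
    edgeIndicator e (arev a) = -edgeIndicator e a := by
  have hne : arev e ≠ e := fun h => by simp [IsArc, arev, Prod.ext_iff] at he h; omega
  by_cases h₁ : a = e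
  · simp [edgeIndicator, h₁, hne]
  · by_cases h₂ : a = arev e
    · simp [edgeIndicator, h₂, hne]
    · simp [edgeIndicator, arev_eq_iff, h₁, h₂]

lemma sumOn_eq_wind_sub_wind {C : List Vtx} (hcl : C.head? = C.getLast?)
    (hC : ∀ a ∈ arcsOf C, IsArc a) {f : GArc → ℤ}
    (hskew : ∀ a, IsArc a → f (arev a) = -f a) {A B : Vtx} (hAB : A ≠ B)
    (hcurl : ∀ c, curl f c = (if c = A then 1 else 0) - (if c = B then 1 else 0)) :
    sumOn f C = wind C A - wind C B := by
  rw [sumOn_eq_sum_wind_mul_curl (F := {A, B}) hskew (fun c hc => ?_) hcl hC,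
    Finset.sum_pair hAB, hcurl, hcurl]
  · simp [hAB, hAB.symm, sub_eq_add_neg]
  · simp only [Finset.mem_insert, Finset.mem_singleton, not_or] at hc
    simp [hcurl, hc.1, hc.2]

section Crossing

variable {C : List Vtx} (hcl : C.head? = C.getLast?) (hC : ∀ a ∈ arcsOf C, IsArc a)
include hcl hC

lemma sumOn_edgeIndicator_east (x y : ℤ) :
    sumOn (edgeIndicator ((x, y), (x + 1, y))) C = wind C (x, y) - wind C (x, y - 1) := by
  refine sumOn_eq_wind_sub_wind hcl hC (fun a _ => edgeIndicator_arev (by simp [IsArc]) a)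
    (by simp [eq_sub_iff_add_eq]) ?_
  rintro ⟨p, q⟩
  simp only [curl, edgeIndicator, arev, Prod.mk.injEq]
  split_ifs <;> omega

lemma sumOn_edgeIndicator_west (x y : ℤ) :
    sumOn (edgeIndicator ((x, y), (x - 1, y))) C = wind C (x - 1, y - 1) - wind C (x - 1, y) := by
  refine sumOn_eq_wind_sub_wind hcl hC (fun a _ => edgeIndicator_arev (by simp [IsArc]) a)
    (by simp) ?_
  rintro ⟨p, q⟩
  simp only [curl, edgeIndicator, arev, Prod.mk.injEq]
  split_ifs <;> omega

lemma sumOn_edgeIndicator_north (x y : ℤ) :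
    sumOn (edgeIndicator ((x, y), (x, y + 1))) C = wind C (x - 1, y) - wind C (x, y) := by
  refine sumOn_eq_wind_sub_wind hcl hC (fun a _ => edgeIndicator_arev (by simp [IsArc]) a)
    (by simp) ?_
  rintro ⟨p, q⟩
  simp only [curl, edgeIndicator, arev, Prod.mk.injEq]
  split_ifs <;> omega

lemma sumOn_edgeIndicator_south (x y : ℤ) :
    sumOn (edgeIndicator ((x, y), (x, y - 1))) C = wind C (x, y - 1) - wind C (x - 1, y - 1) := by
  refine sumOn_eq_wind_sub_wind hcl hC (fun a _ => edgeIndicator_arev (by simp [IsArc]) a)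
    (by simp [eq_sub_iff_add_eq]) ?_
  rintro ⟨p, q⟩
  simp only [curl, edgeIndicator, arev, Prod.mk.injEq]
  split_ifs <;> omega

lemma abs_wind_cellA_sub_cellB {e : GArc} (he : IsArc e) :
    |wind C (cellA e) - wind C (cellB e)| = |sumOn (edgeIndicator e) C| := by
  obtain ⟨⟨x, y⟩, v⟩ := e
  rcases isArc_iff.1 he with rfl | rfl | rfl | rfl
  · simp [cellA, cellB, sumOn_edgeIndicator_east hcl hC]
  · simp [cellA, cellB, sumOn_edgeIndicator_west hcl hC, abs_sub_comm]
  · simp [cellA, cellB, sumOn_edgeIndicator_north hcl hC, abs_sub_comm]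
  · simp [cellA, cellB, sumOn_edgeIndicator_south hcl hC, eq_sub_iff_add_eq]

end Crossing

lemma mem_arcsOf_iff {a : GArc} {C : List Vtx} :
    a ∈ arcsOf C ↔ ∃ j, ∃ h : j + 1 < C.length, a = (C[j], C[j + 1]) := by
  rw [arcsOf, List.mem_iff_getElem]
  constructor
  · rintro ⟨j, hj, rfl⟩
    simp only [List.length_zip, List.length_tail] at hj
    exact ⟨j, by omega, by simp [List.getElem_zip, List.getElem_tail]⟩
  · rintro ⟨j, hj, rfl⟩
    exact ⟨j, by simp; omega, by simp [List.getElem_zip, List.getElem_tail]⟩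

def cellSum (w : Vtx → ℤ) (a : GArc) : ℤ := w (cellA a) + w (cellB a)

lemma cellSum_arev (w : Vtx → ℤ) {a : GArc} (ha : IsArc a) :
    cellSum w (arev a) = cellSum w a := by
  rw [cellSum, cellSum, cellA_arev ha, cellB_arev ha]

lemma cellSum_eq_of_eq_across_other_edges (w : Vtx → ℤ) {v u t : Vtx} (hu : IsArc (v, u))
    (ht : IsArc (v, t)) (hut : u ≠ t)
    (hw : ∀ s, IsArc (v, s) → s ≠ u → s ≠ t → w (cellA (v, s)) = w (cellB (v, s))) :
    cellSum w (v, t) = cellSum w (v, u) := by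
  obtain ⟨x, y⟩ := v
  have hE := hw (x + 1, y) (by simp [IsArc])
  have hW := hw (x - 1, y) (by simp [IsArc])
  have hN := hw (x, y + 1) (by simp [IsArc])
  have hS := hw (x, y - 1) (by simp [IsArc])
  simp only [cellA, cellB, cellSum] at hE hW hN hS ⊢
  rcases isArc_iff.1 hu with rfl | rfl | rfl | rfl <;>
    rcases isArc_iff.1 ht with rfl | rfl | rfl | rfl <;>
    simp_all [Prod.ext_iff, eq_sub_iff_add_eq] <;> omega

lemma exists_wind_eq_zero_of_le (C : List Vtx) :
    ∃ M : ℤ, ∀ c : Vtx, M ≤ c.1 → wind C c = 0 := by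
  obtain ⟨M, hM⟩ := (C.toFinset.image Prod.fst).bddAbove
  refine ⟨M, fun c hc => List.sum_eq_zero fun x hx => ?_⟩
  obtain ⟨a, ha, rfl⟩ := List.mem_map.1 hx
  have : a.1.1 ≤ M := hM (Finset.mem_image_of_mem _ (List.mem_toFinset.2 (List.of_mem_zip ha).1))
  rw [windTerm, if_neg]
  omega

lemma exists_mem_arcsOf_cellB_eq {C : List Vtx} (hcl : C.head? = C.getLast?)
    (hC : ∀ a ∈ arcsOf C, IsArc a) {c : Vtx} (h : wind C c ≠ wind C (c.1 + 1, c.2)) :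
    ∃ a ∈ arcsOf C, cellB a = c := by
  set e : GArc := ((c.1 + 1, c.2), (c.1 + 1, c.2 + 1))
  have he : IsArc e := by simp [e, IsArc]
  have hA : cellA e = (c.1 + 1, c.2) := by simp [e, cellA]
  have hB : cellB e = c := by simp [e, cellB]
  have hcross := abs_wind_cellA_sub_cellB hcl hC he
  rw [hA, hB] at hcross
  have hsum : sumOn (edgeIndicator e) C ≠ 0 := by
    intro h0
    rw [h0, abs_zero, abs_eq_zero, sub_eq_zero] at hcross
    exact h hcross.symm
  obtain ⟨x, hx, hx0⟩ := List.exists_mem_ne_zero_of_sum_ne_zero hsum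
  obtain ⟨b, hb, rfl⟩ := List.mem_map.1 hx
  refine ⟨b, hb, ?_⟩
  simp only [edgeIndicator] at hx0
  split_ifs at hx0 with h₁ h₂
  · rwa [h₁]
  · rwa [h₂, cellB_arev he]
  · exact absurd rfl hx0

namespace IsElemCycle

variable {C : List Vtx} (hC : IsElemCycle C)
include hC

lemma getElem_length_sub_one :
    C[C.length - 1]'(by have := hC.1.1; omega) = C[0]'(by have := hC.1.1; omega) := by
  have hne : C ≠ [] := by rintro rfl; exact absurd hC.1.1 (by simp)
  have h := hC.1.2.1
  rw [List.head?_eq_getElem?, List.getLast?_eq_some_getLast hne, List.getLast_eq_getElem] at h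
  simpa [List.getElem?_eq_getElem (by have := hC.1.1; omega : 0 < C.length)] using h.symm

lemma getElem_inj {i j : ℕ} (hi : i < C.length) (hj : j < C.length) (h : C[i] = C[j]) :
    i = j ∨ (i = 0 ∧ j = C.length - 1) ∨ (i = C.length - 1 ∧ j = 0) := by
  have hnd : ∀ {k l} (hk : k < C.length - 1) (hl : l < C.length - 1), C[k] = C[l] → k = l :=
    fun hk hl h => by
      have := hC.2.getElem_inj_iff (hi := by simpa using hk) (hj := by simpa using hl)
      simpa only [List.getElem_dropLast, h, true_iff] using this
  have hlast := hC.getElem_length_sub_one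
  rcases lt_or_eq_of_le (Nat.le_sub_one_of_lt hi) with hi' | rfl <;>
    rcases lt_or_eq_of_le (Nat.le_sub_one_of_lt hj) with hj' | rfl
  · exact .inl (hnd hi' hj' h)
  · exact .inr (.inl ⟨hnd hi' (by omega) (h.trans hlast), rfl⟩)
  · exact .inr (.inr ⟨rfl, hnd hj' (by omega) (h.symm.trans hlast)⟩)
  · exact .inl rfl


lemma nodup_arcsOf : (arcsOf C).Nodup :=
  List.Nodup.of_map Prod.fst (by rw [map_fst_arcsOf]; exact hC.2)

lemma arev_notMem_arcsOf (h4 : 4 ≤ C.length) {a : GArc} (ha : a ∈ arcsOf C) :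
    arev a ∉ arcsOf C := by
  intro ha'
  obtain ⟨j, hj, rfl⟩ := mem_arcsOf_iff.1 ha
  obtain ⟨k, hk, hjk⟩ := mem_arcsOf_iff.1 ha'
  simp only [arev, Prod.mk.injEq] at hjk
  have h₁ := hC.getElem_inj _ _ hjk.1
  have h₂ := hC.getElem_inj _ _ hjk.2
  omega

lemma sumOn_edgeIndicator_of_mem {a : GArc} (h4 : 4 ≤ C.length) (ha : a ∈ arcsOf C) :
    sumOn (edgeIndicator a) C = 1 := by
  rw [sumOn, ← List.sum_toFinset _ hC.nodup_arcsOf, Finset.sum_eq_single a]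
  · simp [edgeIndicator]
  · intro b hb hba
    have : b ≠ arev a := fun h => hC.arev_notMem_arcsOf h4 ha (h ▸ List.mem_toFinset.1 hb)
    simp [edgeIndicator, hba, this]
  · intro h
    exact absurd (List.mem_toFinset.2 ha) h

lemma abs_wind_cellA_sub_cellB_of_mem {a : GArc} (h4 : 4 ≤ C.length) (ha : a ∈ arcsOf C) :
    |wind C (cellA a) - wind C (cellB a)| = 1 := by
  rw [_root_.abs_wind_cellA_sub_cellB hC.1.2.1 hC.1.2.2 (hC.1.2.2 a ha),
    hC.sumOn_edgeIndicator_of_mem h4 ha, abs_one]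


lemma sumOn_edgeIndicator_eq_zero {j : ℕ} (hj : j + 2 < C.length) {s : Vtx} (hsu : s ≠ C[j])
    (hst : s ≠ C[j + 2]) : sumOn (edgeIndicator (C[j + 1], s)) C = 0 := by
  refine List.sum_eq_zero fun x hx => ?_
  obtain ⟨b, hb, rfl⟩ := List.mem_map.1 hx
  obtain ⟨k, hk, rfl⟩ := mem_arcsOf_iff.1 hb
  simp only [edgeIndicator, arev, Prod.mk.injEq]
  split_ifs with h₁ h₂
  · obtain rfl : k = j + 1 := by rcases hC.getElem_inj _ _ h₁.1 with h | h | h <;> omega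
    exact absurd h₁.2.symm hst
  · obtain rfl : k = j := by rcases hC.getElem_inj _ _ h₂.2 with h | h | h <;> omega
    exact absurd h₂.1.symm hsu
  · rfl

lemma cellSum_wind_eq (h4 : 4 ≤ C.length) {a : GArc} (ha : a ∈ arcsOf C) :
    cellSum (wind C) a = cellSum (wind C) (C[0], C[1]) := by
  have harc : ∀ i (hi : i + 1 < C.length), IsArc (C[i], C[i + 1]) :=
    fun i hi => hC.1.2.2 _ (mem_arcsOf_iff.2 ⟨i, hi, rfl⟩)
  have step : ∀ j (hj : j + 2 < C.length),
      cellSum (wind C) (C[j + 1], C[j + 2]) = cellSum (wind C) (C[j], C[j + 1]) := by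
    intro j hj
    rw [← cellSum_arev _ (harc j (by omega))]
    refine cellSum_eq_of_eq_across_other_edges _ (harc j (by omega)).arev (harc (j + 1) hj)
      (fun h => by rcases hC.getElem_inj _ _ h with h | h | h <;> omega) fun s hs hsu hst => ?_
    have hcross := abs_wind_cellA_sub_cellB hC.1.2.1 hC.1.2.2 hs
    rwa [hC.sumOn_edgeIndicator_eq_zero hj hsu hst, abs_zero, abs_eq_zero, sub_eq_zero] at hcross
  obtain ⟨j, hj, rfl⟩ := mem_arcsOf_iff.1 ha
  clear ha
  induction j with
  | zero => rfl
  | succ j ih => rw [step j hj, ih (by omega)]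

lemma wind_eq_zero_or (h4 : 4 ≤ C.length) (c : Vtx) :
    wind C c = 0 ∨ 2 * wind C c + 1 = cellSum (wind C) (C[0], C[1]) ∨
      2 * wind C c - 1 = cellSum (wind C) (C[0], C[1]) := by
  obtain ⟨M, hM⟩ := exists_wind_eq_zero_of_le C
  suffices ∀ k : ℕ, ∀ c : Vtx, M - c.1 ≤ k → wind C c = 0 ∨
      2 * wind C c + 1 = cellSum (wind C) (C[0], C[1]) ∨
      2 * wind C c - 1 = cellSum (wind C) (C[0], C[1]) from this _ c (Int.self_le_toNat _)
  intro k
  induction k with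
  | zero => exact fun c hc => .inl (hM c (by omega))
  | succ k ih =>
    intro c hc
    by_cases h : wind C c = wind C (c.1 + 1, c.2)
    · rw [h]
      exact ih _ (by simp only; omega)
    · obtain ⟨a, ha, rfl⟩ := exists_mem_arcsOf_cellB_eq hC.1.2.1 hC.1.2.2 h
      have hdiff := hC.abs_wind_cellA_sub_cellB_of_mem h4 ha
      have hsum := hC.cellSum_wind_eq h4 ha
      rw [cellSum] at hsum
      rcases (abs_eq zero_le_one).1 hdiff with h | h <;> omega

theorem isClockwise_or_isClockwise_reverse : IsClockwise C ∨ IsClockwise C.reverse := by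
  have hlen := hC.1.1
  rcases (by omega : C.length = 2 ∨ C.length = 3 ∨ 4 ≤ C.length) with h | h | h4
  · obtain ⟨u, v, rfl⟩ := List.length_eq_two.1 h
    obtain rfl : u = v := by simpa using hC.1.2.1
    exact absurd (hC.1.2.2 (u, u) (by simp [arcsOf])) (by simp [IsArc])
  · obtain ⟨u, v, w, rfl⟩ := List.length_eq_three.1 h
    obtain rfl : u = w := by simpa using hC.1.2.1
    refine .inl fun c => le_of_eq ?_
    have := windTerm_arev c (u, v)
    simp only [arev] at this
    simp [wind, sumOn, arcsOf, this]
  · rcases le_or_gt (cellSum (wind C) (C[0], C[1])) 0 with hS | hS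
    · exact .inl fun c => by rcases hC.wind_eq_zero_or h4 c with h | h | h <;> omega
    · exact .inr fun c => by
        rw [wind_reverse]
        rcases hC.wind_eq_zero_or h4 c with h | h | h <;> omega

end IsElemCycle

namespace IsTiling

variable {F : Finset Vtx} {D : Set GArc} (hD : IsTiling F D)
include hD

lemma chi_arev (a : GArc) : chi D (arev a) = chi D a := by
  have h : arev a ∈ D ↔ a ∈ D := ⟨fun h => by simpa using hD.1 _ h, hD.1 a⟩
  simp only [chi, h]

lemma sum_chi_sides (c : Vtx) : ((sides c).map (chi D)).sum = if c ∈ F then 1 else 0 := by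
  split_ifs with hc
  · obtain ⟨a₀, ⟨ha₀, ha₀D⟩, huniq⟩ := hD.2.2 c hc
    have hchi : ∀ s ∈ sides c, chi D s = if s = a₀ then 1 else 0 := fun s hs => by
      by_cases h : s = a₀
      · simp [chi, h, ha₀D]
      · simp only [chi, h, if_false, ite_eq_right_iff, one_ne_zero, imp_false]
        exact fun hsD => h (huniq s ⟨hs, hsD⟩)
    rw [List.map_congr_left hchi]
    simp only [sides, List.mem_cons, List.not_mem_nil, or_false] at ha₀
    rcases ha₀ with rfl | rfl | rfl | rfl <;> simp [sides]
  · refine List.sum_eq_zero fun x hx => ?_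
    obtain ⟨s, hs, rfl⟩ := List.mem_map.1 hx
    have hcell : cellA s = c ∨ cellB s = c := by
      simp only [sides, List.mem_cons, List.not_mem_nil, or_false] at hs
      rcases hs with rfl | rfl | rfl | rfl <;> simp [cellA, cellB]
    have : s ∉ D := fun hsD => by
      obtain ⟨-, hA, hB⟩ := hD.2.1 s hsD
      rcases hcell with h | h <;> exact hc (h ▸ ‹_›)
    simp [chi, this]

lemma curl_sp_mul_chi (c : Vtx) :
    curl (fun a => sp a * chi D a) c = if c ∈ F then -colorSign c else 0 := by
  have h := hD.sum_chi_sides c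
  simp only [sides, List.map_cons, List.map_nil, List.sum_cons, List.sum_nil] at h
  have hsp :
      colorSign (c.1, c.2 + 1) = -colorSign c ∧ colorSign (c.1 + 1, c.2) = -colorSign c := by
    simp only [colorSign]
    constructor <;> split_ifs <;> omega
  simp only [curl, sp, hsp.1, hsp.2]
  split_ifs at h ⊢ <;> linear_combination (-colorSign c) * h

lemma sumOn_sp_mul_chi {C : List Vtx} (hcl : C.head? = C.getLast?)
    (hC : ∀ a ∈ arcsOf C, IsArc a) :
    sumOn (fun a => sp a * chi D a) C = DisF F C := by
  rw [sumOn_eq_sum_wind_mul_curl (F := F) (fun a ha => by rw [sp_arev ha, hD.chi_arev]; ring)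
    (fun c hc => by rw [hD.curl_sp_mul_chi, if_neg hc]) hcl hC, DisF, ← Finset.sum_neg_distrib]
  refine Finset.sum_congr rfl fun c hc => ?_
  rw [hD.curl_sp_mul_chi, if_pos hc, mul_neg]

end IsTiling

lemma IsElemCycleF.isElemCycle {F : Finset Vtx} {C : List Vtx} (hC : IsElemCycleF F C) :
    IsElemCycle C :=
  ⟨⟨hC.1.1, hC.1.2.1, fun a ha => (hC.1.2.2 a ha).1⟩, hC.2⟩

lemma IsEquilibrium.sumOn_sp_add_sumOn {F : Finset Vtx} {ef : GArc → ℤ}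
    (hef : IsEquilibrium F ef) {C : List Vtx} (hC : IsElemCycleF F C) :
    sumOn sp C + sumOn ef C = 4 * DisF F C := by
  rcases hC.isElemCycle.isClockwise_or_isClockwise_reverse with hcw | hcw
  · exact hef.2 C hC hcw
  · have h := hef.2 _ hC.reverse hcw
    rw [sumOn_reverse fun a ha => sp_arev (hC.1.2.2 a ha).1,
      sumOn_reverse fun a ha => hef.1 a (hC.1.2.2 a ha), DisF_reverse] at h
    linarith

lemma chi_nonneg (D : Set GArc) (a : GArc) : 0 ≤ chi D a := by
  unfold chi
  split_ifs <;> norm_num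

namespace StronglyCriticalCycle

variable {F : Finset Vtx} {ef : GArc → ℤ} {C : List Vtx} (hC : StronglyCriticalCycle F ef C)
include hC

lemma tArc_eq {a : GArc} (ha : a ∈ arcsOf C) : tArc F ef a = ef a + sp a := by
  unfold tArc
  split_ifs with h
  · rw [hC.2 a ha ⟨(hC.1.1.1.2.2 a ha).1, h⟩]
    ring
  · rfl

lemma DisF_eq_zero (hef : IsEquilibrium F ef) : DisF F C = 0 := by
  have h := hC.1.2
  rw [sumOn_congr fun a ha => hC.tArc_eq ha, sumOn_add] at h
  linarith [hef.sumOn_sp_add_sumOn hC.1.1]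

lemma chi_eq_zero (hef : IsEquilibrium F ef) {D : Set GArc} (hD : IsTiling F D) {a : GArc}
    (ha : a ∈ arcsOf C) : chi D a = 0 := by
  have hsum : sumOn (chi D) C = 0 := by
    rw [← hC.DisF_eq_zero hef,
      ← hD.sumOn_sp_mul_chi hC.1.1.1.2.1 fun a ha => (hC.1.1.1.2.2 a ha).1]
    refine sumOn_congr fun a ha => ?_
    by_cases haD : a ∈ D
    · rw [hC.2 a ha (hD.2.1 a haD), one_mul]
    · simp [chi, haD]
  refine List.all_zero_of_le_zero_le_of_sum_eq_zero (fun x hx => ?_) hsum (List.mem_map_of_mem ha)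
  obtain ⟨b, -, rfl⟩ := List.mem_map.1 hx
  exact chi_nonneg D b

end StronglyCriticalCycle

theorem strongly_critical_cycle_in_GT_and_cuts_no_tile_general (F : Finset Vtx)
    (ef : GArc → ℤ) (hef : IsEquilibrium F ef)
    (C : List Vtx) (hC : StronglyCriticalCycle F ef C)
    (D : Set GArc) (hD : IsTiling F D) :
    ∀ a ∈ arcsOf C, GTArc F ef D a ∧ chi D a = 0 := by
  intro a ha
  have hchi := hC.chi_eq_zero hef hD ha
  refine ⟨⟨hC.1.1.1.2.2 a ha, ?_⟩, hchi⟩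
  rw [gT, hchi, hC.tArc_eq ha]
  ring

/-- a strongly critical elementary cycle is a cycle of `G_T` for
every tiling `T`, and it cuts no tile of `T`. -/
theorem strongly_critical_cycle_in_GT_and_cuts_no_tile (F : Finset Vtx)
    (hF : IsFigure F) (ef : GArc → ℤ) (hef : IsEquilibrium F ef)
    (C : List Vtx) (hC : StronglyCriticalCycle F ef C)
    (D : Set GArc) (hD : IsTiling F D) :
    ∀ a ∈ arcsOf C, GTArc F ef D a ∧ chi D a = 0 :=
  strongly_critical_cycle_in_GT_and_cuts_no_tile_general F ef hef C hC D hD
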